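/- Let B = (b_1,b_2,...) be an enumeration of ℚ ∩ [0,1] and let ā = (a_1,a_2,...) be the 2-Toeplitz sequence associated with B. Then for every c ∈ [0,1], the sequence (c,a_1,a_2,...) ∈ [0,1]^ℕ is minimal. -/

import Mathlib

/-!
The 2-Toeplitz sequence `t` is regularly recurrent: its first `m` terms repeat with period
`2 ^ m`. Hence every point of its orbit closure contains each initial window of `t`, so `t` lies
in the orbit closure of that point, which is minimality. Prepending `c` does not change the orbit
closure: `c` is a limit of rationals `b i` with `i` arbitrarily large, and from position `2 ^ i - 1`
on, `t` reads `b i` followed by a copy of its own first `2 ^ i - 1` terms.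
-/

open Set unitInterval

/-- The left shift `S` on sequences: `S(x₁,x₂,x₃,…) = (x₂,x₃,…)`. -/
def shiftSeq {X : Type*} (z : ℕ → X) : ℕ → X := fun n => z (n + 1)

/-- The closure of the forward shift-orbit `{z, Sz, S²z, …}` of a sequence `z`,
inside the sequence space `ℕ → X`.  (For a compact metric space `X` the product
topology on `ℕ → X` is exactly the topology of the metric
`d̄(x̄,ȳ) = ∑ᵢ d(xᵢ,yᵢ)/2ⁱ`.) -/
def shiftOrbitClosure {X : Type*} [TopologicalSpace X] (z : ℕ → X) : Set (ℕ → X) :=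
  closure (Set.range fun k => shiftSeq^[k] z)

/-- A sequence `z` is *minimal* if the closure of its shift-orbit is a minimal
dynamical system under the shift, i.e. every point of this closure has dense
forward orbit in it. -/
def IsMinimalSeq {X : Type*} [TopologicalSpace X] (z : ℕ → X) : Prop :=
  ∀ w ∈ shiftOrbitClosure z, shiftOrbitClosure z ⊆ shiftOrbitClosure w

/-- The 2-Toeplitz sequence of `B = (b 0, b 1, …)` (all sequences 0-indexed):
its `n`-th term is `b p` where `2 ^ p` exactly divides `n + 1`; equivalently the
term at (1-indexed) position `j` is `b_i` for all `j ≡ 2^(i-1) (mod 2^i)`. -/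
def toeplitz2 {X : Type*} (b : ℕ → X) : ℕ → X :=
  fun n => b (padicValNat 2 (n + 1))

/-- Prepend a term to a sequence. -/
def consSeq {X : Type*} (c : X) (z : ℕ → X) : ℕ → X
  | 0 => c
  | n + 1 => z n

open Filter Topology

section Shift

variable {X : Type*}

lemma shiftSeq_iterate_apply (z : ℕ → X) (k n : ℕ) : shiftSeq^[k] z n = z (n + k) := by
  induction k generalizing z with
  | zero => rfl
  | succ k ih => rw [Function.iterate_succ_apply, ih]; rfl

@[simp]
lemma shiftSeq_consSeq (c : X) (z : ℕ → X) : shiftSeq (consSeq c z) = z := rfl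

def IsRegularlyRecurrent (z : ℕ → X) : Prop :=
  ∀ m, ∃ N, 0 < N ∧ ∀ q, ∀ j < m, z (j + q * N) = z j

variable [TopologicalSpace X]

lemma continuous_shiftSeq_iterate (k : ℕ) : Continuous (shiftSeq^[k] : (ℕ → X) → ℕ → X) :=
  continuous_pi fun n => by
    simpa only [shiftSeq_iterate_apply] using continuous_apply (n + k)

lemma shiftSeq_mem_shiftOrbitClosure (z : ℕ → X) : shiftSeq z ∈ shiftOrbitClosure z :=
  subset_closure ⟨1, rfl⟩

lemma shiftOrbitClosure_subset_of_mem {z w : ℕ → X} (h : w ∈ shiftOrbitClosure z) :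
    shiftOrbitClosure w ⊆ shiftOrbitClosure z := by
  refine closure_minimal (range_subset_iff.2 fun k => ?_) isClosed_closure
  refine map_mem_closure (continuous_shiftSeq_iterate k) h ?_
  rintro _ ⟨j, rfl⟩
  exact ⟨k + j, Function.iterate_add_apply shiftSeq k j z⟩

lemma shiftOrbitClosure_consSeq {c : X} {z : ℕ → X} (h : consSeq c z ∈ shiftOrbitClosure z) :
    shiftOrbitClosure (consSeq c z) = shiftOrbitClosure z := by
  refine (shiftOrbitClosure_subset_of_mem h).antisymm (shiftOrbitClosure_subset_of_mem ?_)
  simpa only [shiftSeq_consSeq] using shiftSeq_mem_shiftOrbitClosure (consSeq c z)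

lemma mem_shiftOrbitClosure_of_forall_exists {z w : ℕ → X}
    (h : ∀ m, ∀ U : ℕ → Set X, (∀ j, U j ∈ 𝓝 (z j)) → ∃ k, ∀ j < m, w (j + k) ∈ U j) :
    z ∈ shiftOrbitClosure w := by
  rw [shiftOrbitClosure, mem_closure_iff_nhds]
  intro V hV
  rw [nhds_pi, Filter.mem_pi] at hV
  obtain ⟨F, hF, U, hU, hFV⟩ := hV
  obtain ⟨m, hm⟩ := hF.bddAbove
  obtain ⟨k, hk⟩ := h (m + 1) U hU
  refine ⟨shiftSeq^[k] w, hFV fun j hj => ?_, k, rfl⟩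
  rw [shiftSeq_iterate_apply]
  exact hk j (Nat.lt_succ_of_le (hm hj))

lemma mem_shiftOrbitClosure_of_forall_exists_eq {z w : ℕ → X}
    (h : ∀ m, ∃ k, ∀ j < m, w (j + k) = z j) : z ∈ shiftOrbitClosure w :=
  mem_shiftOrbitClosure_of_forall_exists fun m U hU => by
    obtain ⟨k, hk⟩ := h m
    exact ⟨k, fun j hj => (hk j hj).symm ▸ mem_of_mem_nhds (hU j)⟩

namespace IsRegularlyRecurrent

variable [T1Space X] {z : ℕ → X}

/-- Within `N` steps every shift of `z` returns to a point agreeing with `z` on `[0, m)`;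
this closed condition passes to the orbit closure. -/
theorem exists_shift_eqOn_of_mem (hz : IsRegularlyRecurrent z) {w : ℕ → X}
    (hw : w ∈ shiftOrbitClosure z) (m : ℕ) : ∃ r, ∀ j < m, w (j + r) = z j := by
  obtain ⟨N, hN, hper⟩ := hz m
  set K : Set (ℕ → X) := {x | ∀ j < m, x j = z j}
  have hK : IsClosed K := by
    simp only [K, ofPred_forall]
    exact isClosed_iInter fun j => isClosed_iInter fun _ =>
      isClosed_singleton.preimage (continuous_apply j)
  have hsub : shiftOrbitClosure z ⊆ ⋃ r ∈ Finset.range (N + 1), shiftSeq^[r] ⁻¹' K := by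
    refine closure_minimal ?_ (isClosed_biUnion_finset fun r _ =>
      hK.preimage (continuous_shiftSeq_iterate r))
    rintro _ ⟨k, rfl⟩
    have hlt : k < N * (k / N + 1) := Nat.lt_mul_div_succ k hN
    have hle : k / N * N ≤ k := Nat.div_mul_le_self k N
    refine mem_biUnion (x := (k / N + 1) * N - k) (Finset.mem_range.2 (by lia)) fun j hj => ?_
    rw [← Function.iterate_add_apply, shiftSeq_iterate_apply, ← hper (k / N + 1) j hj]
    congr 1
    lia
  obtain ⟨r, -, hr⟩ := mem_iUnion₂.1 (hsub hw)
  exact ⟨r, fun j hj => by simpa only [shiftSeq_iterate_apply] using hr j hj⟩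

theorem isMinimalSeq (hz : IsRegularlyRecurrent z) : IsMinimalSeq z := fun _ hw =>
  shiftOrbitClosure_subset_of_mem
    (mem_shiftOrbitClosure_of_forall_exists_eq (hz.exists_shift_eqOn_of_mem hw))

end IsRegularlyRecurrent

end Shift

lemma padicValNat_add_mul_pow {p n M : ℕ} [Fact p.Prime] (hn : n ≠ 0) (hnM : n < p ^ M) (k : ℕ) :
    padicValNat p (n + k * p ^ M) = padicValNat p n := by
  have hsum : n + k * p ^ M ≠ 0 := by lia
  have key : ∀ e ≤ M, e ≤ padicValNat p (n + k * p ^ M) ↔ e ≤ padicValNat p n := fun e he => by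
    rw [← padicValNat_dvd_iff_le hsum, ← padicValNat_dvd_iff_le hn,
      Nat.dvd_add_left (Dvd.dvd.mul_left (pow_dvd_pow p he) k)]
  have hlt : padicValNat p n < M :=
    (Nat.pow_lt_pow_iff_right (Fact.out : p.Prime).one_lt).1
      ((Nat.le_of_dvd (Nat.pos_of_ne_zero hn) pow_padicValNat_dvd).trans_lt hnM)
  refine le_antisymm (not_lt.1 fun h => ?_) ((key _ hlt.le).2 le_rfl)
  exact (Nat.lt_succ_self _).not_ge ((key _ hlt).1 h)

section Toeplitz

variable {X : Type*}

lemma toeplitz2_add_mul_two_pow (b : ℕ → X) {j M : ℕ} (hj : j + 1 < 2 ^ M) (q : ℕ) :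
    toeplitz2 b (j + q * 2 ^ M) = toeplitz2 b j := by
  have : Fact (Nat.Prime 2) := ⟨Nat.prime_two⟩
  simp only [toeplitz2, add_right_comm j, padicValNat_add_mul_pow (Nat.succ_ne_zero j) hj]

lemma toeplitz2_two_pow_sub_one (b : ℕ → X) (i : ℕ) : toeplitz2 b (2 ^ i - 1) = b i := by
  have : Fact (Nat.Prime 2) := ⟨Nat.prime_two⟩
  simp only [toeplitz2, Nat.sub_add_cancel Nat.one_le_two_pow, padicValNat.prime_pow]

lemma toeplitz2_isRegularlyRecurrent (b : ℕ → X) : IsRegularlyRecurrent (toeplitz2 b) :=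
  fun m => ⟨2 ^ m, by positivity, fun q j hj =>
    toeplitz2_add_mul_two_pow b ((Nat.succ_le_of_lt hj).trans_lt m.lt_two_pow_self) q⟩

theorem consSeq_mem_shiftOrbitClosure_toeplitz2 [TopologicalSpace X] {b : ℕ → X} {c : X}
    (hc : MapClusterPt c atTop b) : consSeq c (toeplitz2 b) ∈ shiftOrbitClosure (toeplitz2 b) := by
  refine mem_shiftOrbitClosure_of_forall_exists fun m U hU => ?_
  obtain ⟨i, hmi, hi⟩ := (mapClusterPt_iff_frequently.1 hc _ (hU 0)).forall_exists_of_atTop m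
  refine ⟨2 ^ i - 1, ?_⟩
  rintro (_ | j) hj
  · rwa [zero_add, toeplitz2_two_pow_sub_one]
  · have hji : j + 1 < 2 ^ i := by have := i.lt_two_pow_self; lia
    have hshift : j + 1 + (2 ^ i - 1) = j + 1 * 2 ^ i := by lia
    rw [hshift, toeplitz2_add_mul_two_pow b hji]
    exact mem_of_mem_nhds (hU (j + 1))

end Toeplitz

/-- Removing the finitely many `b i` already found near `x` leaves a dense set, which still meets
every neighbourhood of `x`. -/
lemma mapClusterPt_atTop_of_denseRange {X : Type*} [TopologicalSpace X] [T1Space X]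
    [∀ x : X, (𝓝[≠] x).NeBot] {b : ℕ → X} (hb : DenseRange b) (x : X) :
    MapClusterPt x atTop b := by
  refine mapClusterPt_iff_frequently.2 fun V hV => Nat.frequently_atTop_iff_infinite.2 fun hfin => ?_
  obtain ⟨_, hyV, ⟨i, rfl⟩, hi⟩ := (hb.sdiff_finite (hfin.image b)).inter_open_nonempty
    (interior V) isOpen_interior ⟨x, mem_interior_iff_mem_nhds.2 hV⟩
  exact hi ⟨i, interior_subset (s := V) hyV, rfl⟩

lemma dense_setOf_rat_unitInterval : Dense {x : I | ∃ q : ℚ, (q : ℝ) = x} := by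
  refine Subtype.dense_iff.2 ?_
  calc Icc (0 : ℝ) 1 = closure (Ioo 0 1) := (closure_Ioo zero_ne_one).symm
    _ ⊆ closure (closure (Ioo 0 1 ∩ range ((↑) : ℚ → ℝ))) :=
      closure_mono (Rat.denseRange_cast.open_subset_closure_inter isOpen_Ioo)
    _ = closure (Ioo 0 1 ∩ range ((↑) : ℚ → ℝ)) := closure_closure
    _ ⊆ _ := closure_mono <| by
      rintro _ ⟨hx, q, rfl⟩
      exact ⟨⟨q, Ioo_subset_Icc_self hx⟩, ⟨q, rfl⟩, rfl⟩

theorem cons_toeplitz2_of_rat_enumeration_isMinimalSeq_general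
    (b : ℕ → I)
    (hrange : Set.range b = {x : I | ∃ q : ℚ, (q : ℝ) = (x : ℝ)})
    (c : I) :
    IsMinimalSeq (consSeq c (toeplitz2 b)) := by
  have hb : DenseRange b := by rw [DenseRange, hrange]; exact dense_setOf_rat_unitInterval
  have horbit := shiftOrbitClosure_consSeq
    (consSeq_mem_shiftOrbitClosure_toeplitz2 (mapClusterPt_atTop_of_denseRange hb c))
  unfold IsMinimalSeq
  rw [horbit]
  exact (toeplitz2_isRegularlyRecurrent b).isMinimalSeq

/-- If `b` is an enumeration of `ℚ ∩ [0,1]` and `ā` is its 2-Toeplitz sequence,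
then `(c, a₁, a₂, …)` is minimal for every `c ∈ [0,1]`. -/
theorem cons_toeplitz2_of_rat_enumeration_isMinimalSeq
    (b : ℕ → I) (hinj : Function.Injective b)
    (hrange : Set.range b = {x : I | ∃ q : ℚ, (q : ℝ) = (x : ℝ)})
    (c : I) :
    IsMinimalSeq (consSeq c (toeplitz2 b)) :=
  cons_toeplitz2_of_rat_enumeration_isMinimalSeq_general b hrange c
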